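/- arXiv:2310.04545 — 2 statements merged into one kernel-verified Lean document; each statement's English description precedes it below -/
import Mathlib

section
/- For every T ∈ (0,∞), every 0 < ℓ < L < ∞, and every q ∈ [1,∞), there exists a constant C ∈ (0,∞) (depending only on a, q, ℓ, L, T) such that for all t ∈ (0,T] and all x ∈ [ℓ,L]: ∫_0^∞ | ( θ(x,y,t)/(a² x t) ) p_t(θ(x,y,t)) |^q dy ≤ C t^{-q + 1/2}. -/
open MeasureTheory Real Set

/-- Gaussian heat kernel `p_t(z) = (2πt)^{-1/2} exp(-z²/(2t))`. -/
noncomputable def heatK (t z : ℝ) : ℝ :=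
  (Real.sqrt (2 * Real.pi * t))⁻¹ * Real.exp (-(z ^ 2) / (2 * t))

/-- `q_t(x,y) = (1/(ax)) p_t(log x /a - log y /a + at/2)`. -/
noncomputable def qker (a t x y : ℝ) : ℝ :=
  (a * x)⁻¹ * heatK t (Real.log x / a - Real.log y / a + a * t / 2)

/-- `q̂_t(x,y) = (1/(ax)) p_t(log x /a - log y /a - at/2)`. -/
noncomputable def qhat (a t x y : ℝ) : ℝ :=
  (a * x)⁻¹ * heatK t (Real.log x / a - Real.log y / a - a * t / 2)

/-- `θ(x,y,t) = log x /a - log y /a - at/2`. -/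
noncomputable def theta (a x y t : ℝ) : ℝ :=
  Real.log x / a - Real.log y / a - a * t / 2

/-- `Ψ^x(t,y) = ∫_0^x q̂_t(z,y) dz`. -/
noncomputable def Psi (a x t y : ℝ) : ℝ := ∫ z in Set.Ioc (0:ℝ) x, qhat a t z y

/-- standard normal cdf `Φ(ξ) = ∫_{-∞}^ξ p_1(z) dz`. -/
noncomputable def Phi (ξ : ℝ) : ℝ := ∫ z in Set.Iic ξ, heatK 1 z

/-!
Since `|z| e^{-z²/(4t)} ≤ 2√t ≤ √(2πt)`, we get `|z p_t(z)| ≤ e^{-z²/(4t)}`, so for `x ≥ ℓ` the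
integrand is at most `(a²ℓt)^{-q} e^{-qθ²/(4t)}`. In the variable `u = log y` the weight
`e^u e^{-qθ²/(4t)}` is `e^u` times a Gaussian of variance `2a²t/q`, whose integral is explicit
and is `O(√t)` uniformly in `x ≤ L` and `t ≤ T`.
-/

section ExpSubstitution

variable {E : Type*} [NormedAddCommGroup E] [NormedSpace ℝ E]

theorem integral_Ioi_zero_eq_integral_exp_smul_comp (g : ℝ → E) :
    ∫ y in Ioi 0, g y = ∫ u, exp u • g (exp u) := by
  rw [← range_exp, ← image_univ]
  simpa [abs_of_pos (exp_pos _)] using integral_image_eq_integral_abs_deriv_smul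
    MeasurableSet.univ (fun u _ ↦ (hasDerivAt_exp u).hasDerivWithinAt) exp_injective.injOn g

theorem integrableOn_Ioi_zero_iff_integrable_exp_smul_comp (g : ℝ → E) :
    IntegrableOn g (Ioi 0) ↔ Integrable (fun u ↦ exp u • g (exp u)) := by
  rw [← range_exp, ← image_univ]
  simpa [abs_of_pos (exp_pos _)] using integrableOn_image_iff_integrableOn_abs_deriv_smul
    MeasurableSet.univ (fun u _ ↦ (hasDerivAt_exp u).hasDerivWithinAt) exp_injective.injOn g

end ExpSubstitution

lemma exp_neg_mul_sq_sub_add_eq {b : ℝ} (hb : b ≠ 0) (r u : ℝ) :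
    exp (-b * (u - r) ^ 2 + u)
      = exp (r + 1 / (4 * b)) * exp (-b * (u - (r + 1 / (2 * b))) ^ 2) := by
  rw [← exp_add]
  congr 1
  field_simp
  ring

theorem integrable_exp_neg_mul_sq_sub_add {b : ℝ} (hb : 0 < b) (r : ℝ) :
    Integrable fun u ↦ exp (-b * (u - r) ^ 2 + u) := by
  simp_rw [exp_neg_mul_sq_sub_add_eq hb.ne']
  exact ((integrable_exp_neg_mul_sq hb).comp_sub_right _).const_mul _

theorem integral_exp_neg_mul_sq_sub_add {b : ℝ} (hb : b ≠ 0) (r : ℝ) :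
    ∫ u, exp (-b * (u - r) ^ 2 + u) = exp (r + 1 / (4 * b)) * √(π / b) := by
  simp_rw [exp_neg_mul_sq_sub_add_eq hb, integral_const_mul,
    integral_sub_right_eq_self (fun u ↦ exp (-b * u ^ 2)), integral_gaussian]

lemma abs_mul_exp_neg_sq_div_le {t : ℝ} (ht : 0 < t) (z : ℝ) :
    |z| * exp (-z ^ 2 / (4 * t)) ≤ 2 * √t := by
  have hst : √t ^ 2 = t := sq_sqrt ht.le
  -- `2 √t |z| ≤ t + z²` together with `1 + w ≤ exp w`
  have hlin : |z| ≤ 2 * √t * (1 + z ^ 2 / (4 * t)) := by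
    rw [show 2 * √t * (1 + z ^ 2 / (4 * t)) = (4 * t + z ^ 2) / (2 * √t) by
      field_simp; rw [hst]; ring, le_div_iff₀ (by positivity)]
    nlinarith [sq_nonneg (|z| - √t), sq_abs z]
  have hexp : 1 + z ^ 2 / (4 * t) ≤ exp (z ^ 2 / (4 * t)) := by
    linarith [add_one_le_exp (z ^ 2 / (4 * t))]
  rw [neg_div, exp_neg, mul_inv_le_iff₀ (exp_pos _)]
  exact hlin.trans (by gcongr)

theorem abs_mul_heatK_le {t : ℝ} (ht : 0 < t) (z : ℝ) :
    |z * heatK t z| ≤ exp (-z ^ 2 / (4 * t)) := by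
  have hsqrt : 2 * √t ≤ √(2 * π * t) := by
    rw [show 2 * √t = √(4 * t) by
      rw [sqrt_mul' _ ht.le, show (4 : ℝ) = 2 ^ 2 by norm_num, sqrt_sq zero_le_two]]
    exact sqrt_le_sqrt (by nlinarith [pi_gt_three])
  have hpos : 0 < √(2 * π * t) := sqrt_pos.mpr (by positivity)
  have hsplit : exp (-z ^ 2 / (2 * t)) = exp (-z ^ 2 / (4 * t)) * exp (-z ^ 2 / (4 * t)) := by
    rw [← exp_add]; congr 1; field_simp; ring
  rw [heatK, hsplit, abs_mul, abs_of_pos (by positivity : 0 < (√(2 * π * t))⁻¹ * _)]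
  calc |z| * ((√(2 * π * t))⁻¹ * (exp (-z ^ 2 / (4 * t)) * exp (-z ^ 2 / (4 * t))))
      = |z| * exp (-z ^ 2 / (4 * t)) / √(2 * π * t) * exp (-z ^ 2 / (4 * t)) := by ring
    _ ≤ 1 * exp (-z ^ 2 / (4 * t)) := by
      gcongr
      rw [div_le_one hpos]
      exact (abs_mul_exp_neg_sq_div_le ht z).trans hsqrt
    _ = exp (-z ^ 2 / (4 * t)) := one_mul _

lemma exp_mul_exp_neg_mul_theta_sq_eq {a : ℝ} (ha : a ≠ 0) (κ x t u : ℝ) :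
    exp u * exp (-κ * theta a x (exp u) t ^ 2)
      = exp (-(κ / a ^ 2) * (u - (log x - a ^ 2 * t / 2)) ^ 2 + u) := by
  rw [← exp_add, theta, log_exp]
  congr 1
  field_simp
  ring

theorem integrableOn_exp_neg_mul_theta_sq {a κ : ℝ} (ha : a ≠ 0) (hκ : 0 < κ) (x t : ℝ) :
    IntegrableOn (fun y ↦ exp (-κ * theta a x y t ^ 2)) (Ioi 0) := by
  rw [integrableOn_Ioi_zero_iff_integrable_exp_smul_comp]
  simp_rw [smul_eq_mul, exp_mul_exp_neg_mul_theta_sq_eq ha]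
  exact integrable_exp_neg_mul_sq_sub_add (by positivity) _

theorem integral_exp_neg_mul_theta_sq {a κ : ℝ} (ha : a ≠ 0) (hκ : κ ≠ 0) (x t : ℝ) :
    ∫ y in Ioi 0, exp (-κ * theta a x y t ^ 2)
      = exp (log x - a ^ 2 * t / 2 + a ^ 2 / (4 * κ)) * √(π * a ^ 2 / κ) := by
  rw [integral_Ioi_zero_eq_integral_exp_smul_comp]
  simp_rw [smul_eq_mul, exp_mul_exp_neg_mul_theta_sq_eq ha,
    integral_exp_neg_mul_sq_sub_add (div_ne_zero hκ (pow_ne_zero 2 ha))]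
  congr 2 <;> field_simp

theorem integral_exp_neg_mul_theta_sq_le {a x L t T q : ℝ} (ha : a ≠ 0) (hx : 0 < x)
    (hxL : x ≤ L) (ht : 0 < t) (htT : t ≤ T) (hq : 1 ≤ q) :
    ∫ y in Ioi 0, exp (-(q / (4 * t)) * theta a x y t ^ 2)
      ≤ L * exp (a ^ 2 * T) * √(4 * π * a ^ 2) * √t := by
  have hq0 : 0 < q := zero_lt_one.trans_le hq
  rw [integral_exp_neg_mul_theta_sq ha (by positivity)]
  have hκ : a ^ 2 / (4 * (q / (4 * t))) = a ^ 2 * t / q := by field_simp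
  have hvar : π * a ^ 2 / (q / (4 * t)) = 4 * π * a ^ 2 * t / q := by field_simp
  rw [hκ, hvar, mul_assoc _ √(4 * π * a ^ 2), ← sqrt_mul (by positivity)]
  have hexp : exp (log x - a ^ 2 * t / 2 + a ^ 2 * t / q) ≤ L * exp (a ^ 2 * T) :=
    calc exp (log x - a ^ 2 * t / 2 + a ^ 2 * t / q) ≤ exp (log x + a ^ 2 * T) := by
          have : a ^ 2 * t / q ≤ a ^ 2 * T := (div_le_self (by positivity) hq).trans (by gcongr)
          have : 0 ≤ a ^ 2 * t := by positivity
          gcongr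
          linarith
      _ ≤ L * exp (a ^ 2 * T) := by rw [exp_add, exp_log hx]; gcongr
  have hsqrt : √(4 * π * a ^ 2 * t / q) ≤ √(4 * π * a ^ 2 * t) :=
    sqrt_le_sqrt (div_le_self (by positivity) hq)
  exact mul_le_mul hexp hsqrt (sqrt_nonneg _) (by positivity [hx.trans_le hxL])

theorem abs_div_mul_heatK_rpow_le {c d t q : ℝ} (hc : 0 < c) (hcd : c ≤ d) (ht : 0 < t)
    (hq : 0 ≤ q) (z : ℝ) :
    |z / d * heatK t z| ^ q ≤ c⁻¹ ^ q * exp (-(q / (4 * t)) * z ^ 2) := by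
  have hbound : |z / d * heatK t z| ≤ c⁻¹ * exp (-z ^ 2 / (4 * t)) :=
    calc |z / d * heatK t z| = d⁻¹ * |z * heatK t z| := by
          rw [div_mul_eq_mul_div, abs_div, abs_of_pos (hc.trans_le hcd), inv_mul_eq_div]
      _ ≤ c⁻¹ * exp (-z ^ 2 / (4 * t)) := by
          gcongr
          exact abs_mul_heatK_le ht z
  calc |z / d * heatK t z| ^ q ≤ (c⁻¹ * exp (-z ^ 2 / (4 * t))) ^ q := by gcongr
    _ = c⁻¹ ^ q * exp (-(q / (4 * t)) * z ^ 2) := by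
      rw [mul_rpow (by positivity) (exp_pos _).le, ← exp_mul]
      ring_nf

theorem lq_bound_ydxdyPsi_general (a : ℝ) (ha : 0 < a)
    (T ℓ L q : ℝ) (hℓ : 0 < ℓ) (hℓL : ℓ < L) (hq : 1 ≤ q) :
    ∃ C : ℝ, 0 < C ∧ ∀ t ∈ Set.Ioc (0:ℝ) T, ∀ x ∈ Set.Icc ℓ L,
      (∫ y in Set.Ioi (0:ℝ),
          |(theta a x y t / (a ^ 2 * x * t)) * heatK t (theta a x y t)| ^ q)
        ≤ C * t ^ (-q + 1 / 2) := by
  refine ⟨(a ^ 2 * ℓ)⁻¹ ^ q * (L * exp (a ^ 2 * T) * √(4 * π * a ^ 2)),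
    by positivity [hℓ.trans hℓL], ?_⟩
  rintro t ⟨ht, htT⟩ x ⟨hℓx, hxL⟩
  have hq0 : 0 ≤ q := zero_le_one.trans hq
  calc (∫ y in Ioi 0, |(theta a x y t / (a ^ 2 * x * t)) * heatK t (theta a x y t)| ^ q)
      ≤ ∫ y in Ioi 0, (a ^ 2 * ℓ * t)⁻¹ ^ q * exp (-(q / (4 * t)) * theta a x y t ^ 2) := by
        refine integral_mono_of_nonneg (ae_of_all _ fun _ ↦ by positivity)
          ((integrableOn_exp_neg_mul_theta_sq ha.ne' (by positivity) x t).const_mul _)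
          (ae_of_all _ fun _ ↦ abs_div_mul_heatK_rpow_le (by positivity) (by gcongr) ht hq0 _)
    _ = (a ^ 2 * ℓ * t)⁻¹ ^ q * ∫ y in Ioi 0, exp (-(q / (4 * t)) * theta a x y t ^ 2) :=
        integral_const_mul _ _
    _ ≤ (a ^ 2 * ℓ * t)⁻¹ ^ q * (L * exp (a ^ 2 * T) * √(4 * π * a ^ 2) * √t) := by
        gcongr
        exact integral_exp_neg_mul_theta_sq_le ha.ne' (hℓ.trans_le hℓx) hxL ht htT hq
    _ = (a ^ 2 * ℓ)⁻¹ ^ q * (L * exp (a ^ 2 * T) * √(4 * π * a ^ 2)) * t ^ (-q + 1 / 2) := by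
        rw [mul_inv, mul_rpow (by positivity) (by positivity), inv_rpow ht.le, ← rpow_neg ht.le,
          rpow_add ht, ← sqrt_eq_rpow]
        ring

theorem lq_bound_ydxdyPsi (a : ℝ) (ha : 0 < a)
    (T ℓ L q : ℝ) (hT : 0 < T) (hℓ : 0 < ℓ) (hℓL : ℓ < L) (hq : 1 ≤ q) :
    ∃ C : ℝ, 0 < C ∧ ∀ t ∈ Set.Ioc (0:ℝ) T, ∀ x ∈ Set.Icc ℓ L,
      (∫ y in Set.Ioi (0:ℝ),
          |(theta a x y t / (a ^ 2 * x * t)) * heatK t (theta a x y t)| ^ q)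
        ≤ C * t ^ (-q + 1 / 2) :=
  lq_bound_ydxdyPsi_general a ha T ℓ L q hℓ hℓL hq
end

section
/- For every x ∈ (0,∞) and all t, t' ∈ (0,∞): ∫_0^∞ Ψ^x(t,y) Ψ^x(t',y) dy = 2x ( 1 − Φ( (a/2) (t + t')^{1/2} ) ). -/
open MeasureTheory Real Set

/-!
In the coordinate `y = x e^{a m}` one has `Ψ^x(t, y) = Φ((-m - a t / 2) / √t)`, independently of
`x`, and `dy = a x e^{a m} dm`. Integrating by parts against `e^{a m}` moves the derivative onto
the product of the two `Φ` factors; the derivative of each is a heat kernel centred at `-a t / 2`,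
which the weight `e^{a m}` turns into the heat kernel centred at `a t / 2`, while the boundary
terms vanish by a Chernoff bound. What remains are two Gaussian convolutions
`∫ p_t(m - a t / 2) Φ((-m - a t' / 2) / √t') dm = Φ(-(a / 2) √(t + t'))`,
each equal to `1 - Φ((a / 2) √(t + t'))`.
-/

open Filter ProbabilityTheory Topology

section HeatKernel

variable {t t' : ℝ}

lemma heatK_eq_gaussianPDFReal (ht : 0 ≤ t) : heatK t = gaussianPDFReal 0 ⟨t, ht⟩ := by
  ext z
  simp only [heatK, gaussianPDFReal, sub_zero]
  rfl

lemma heatK_neg (t z : ℝ) : heatK t (-z) = heatK t z := by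
  simp [heatK]

lemma continuous_heatK (t : ℝ) : Continuous (heatK t) := by
  unfold heatK
  fun_prop

lemma integrable_heatK (ht : 0 ≤ t) : Integrable (heatK t) := by
  rw [heatK_eq_gaussianPDFReal ht]
  exact integrable_gaussianPDFReal _ _

lemma integral_heatK (ht : 0 < t) : ∫ z, heatK t z = 1 := by
  rw [heatK_eq_gaussianPDFReal ht.le]
  exact integral_gaussianPDFReal_eq_one _ (NNReal.coe_ne_zero.mp ht.ne')

lemma heatK_eq_inv_sqrt_mul_heatK_one (ht : 0 < t) (z : ℝ) :
    heatK t z = (√t)⁻¹ * heatK 1 (z / √t) := by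
  have hsqrt : √(2 * π * t) = √(2 * π * 1) * √t := by
    rw [← sqrt_mul (by positivity), mul_one]
  rw [heatK, heatK, hsqrt, div_pow, sq_sqrt ht.le, mul_inv]
  field_simp

lemma exp_mul_mul_heatK_add (a : ℝ) (ht : t ≠ 0) (m : ℝ) :
    exp (a * m) * heatK t (m + a * t / 2) = heatK t (m - a * t / 2) := by
  rw [heatK, heatK, mul_left_comm, ← exp_add]
  congr 2
  field_simp
  ring

/-- Completing the square in `m`. -/
lemma heatK_sub_mul_heatK_sub (ht : 0 < t) (ht' : 0 < t') (c s m : ℝ) :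
    heatK t (m - c) * heatK t' (s - m)
      = heatK (t + t') (s - c)
        * heatK (t * t' / (t + t')) (m - (t' * c + t * s) / (t + t')) := by
  have hsqrt : √(2 * π * t) * √(2 * π * t')
      = √(2 * π * (t + t')) * √(2 * π * (t * t' / (t + t'))) := by
    rw [← sqrt_mul (by positivity), ← sqrt_mul (by positivity)]
    congr 1
    field_simp
  simp only [heatK]
  rw [mul_mul_mul_comm, mul_mul_mul_comm (√(2 * π * (t + t')))⁻¹, ← mul_inv, ← mul_inv,
    hsqrt, ← exp_add, ← exp_add]
  congr 2
  field_simp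
  ring

lemma integral_heatK_sub_mul_heatK_sub (ht : 0 < t) (ht' : 0 < t') (c s : ℝ) :
    ∫ m, heatK t (m - c) * heatK t' (s - m) = heatK (t + t') (s - c) := by
  simp_rw [heatK_sub_mul_heatK_sub ht ht', integral_const_mul,
    integral_sub_right_eq_self (heatK _), integral_heatK (by positivity : 0 < t * t' / (t + t')),
    mul_one]

end HeatKernel

section Phi

variable {t t' : ℝ}

lemma Phi_eq_measureReal_Iic (ξ : ℝ) : Phi ξ = (gaussianReal 0 1).real (Iic ξ) := by
  rw [measureReal_def, gaussianReal_apply_eq_integral 0 one_ne_zero,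
    ENNReal.toReal_ofReal
      (setIntegral_nonneg measurableSet_Iic fun _ _ => gaussianPDFReal_nonneg ..),
    Phi, heatK_eq_gaussianPDFReal zero_le_one]
  rfl

lemma Phi_nonneg (ξ : ℝ) : 0 ≤ Phi ξ := by
  rw [Phi_eq_measureReal_Iic]
  exact measureReal_nonneg

lemma Phi_le_one (ξ : ℝ) : Phi ξ ≤ 1 := by
  rw [Phi_eq_measureReal_Iic]
  exact measureReal_le_one

lemma Phi_neg (ξ : ℝ) : Phi (-ξ) = 1 - Phi ξ := by
  have := nullSingletonClass_gaussianReal (μ := 0) one_ne_zero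
  have hsymm : (gaussianReal 0 1).map (fun x => -x) = gaussianReal 0 1 := by
    simpa using gaussianReal_map_neg (μ := 0) (v := 1)
  rw [Phi_eq_measureReal_Iic, Phi_eq_measureReal_Iic, ← hsymm,
    map_measureReal_apply measurable_neg measurableSet_Iic, hsymm, Set.neg_preimage, Set.neg_Iic,
    neg_neg,
    ← measureReal_congr Ioi_ae_eq_Ici, ← compl_Iic, probReal_compl_eq_one_sub measurableSet_Iic]

lemma Phi_le_exp {l : ℝ} (hl : 0 ≤ l) (ξ : ℝ) : Phi ξ ≤ exp (l * ξ + l ^ 2 / 2) := by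
  have h := measure_le_le_exp_mul_mgf (μ := gaussianReal 0 1) (X := fun x => x) ξ
    (neg_nonpos.mpr hl) (integrable_exp_mul_gaussianReal _)
  rw [mgf_fun_id_gaussianReal] at h
  refine (Phi_eq_measureReal_Iic ξ).trans_le (h.trans_eq ?_)
  simp [exp_add]

lemma setIntegral_Iic_heatK_sub (ht : 0 < t) (d c : ℝ) :
    ∫ s in Iic d, heatK t (s - c) = Phi ((d - c) / √t) := by
  have hsqrt : 0 < √t := sqrt_pos.mpr ht
  have himg : (fun u => √t * u + c) '' Iic ((d - c) / √t) = Iic d := by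
    rw [← image_image (· + c) (√t * ·), image_mul_left_Iic hsqrt, image_add_const_Iic,
      mul_div_cancel₀ _ hsqrt.ne', sub_add_cancel]
  rw [← himg, integral_image_eq_integral_abs_deriv_smul measurableSet_Iic
    (f' := fun _ => √t)
    (fun u _ => by simpa using ((hasDerivAt_id u).const_mul √t).add_const c |>.hasDerivWithinAt)
    (fun u _ v _ h => by simpa [hsqrt.ne'] using h)]
  refine setIntegral_congr_fun measurableSet_Iic fun u _ => ?_
  rw [smul_eq_mul, abs_of_pos hsqrt, add_sub_cancel_right,
    heatK_eq_inv_sqrt_mul_heatK_one ht, mul_div_cancel_left₀ _ hsqrt.ne',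
    mul_inv_cancel_left₀ hsqrt.ne']

lemma hasDerivAt_Phi (ξ : ℝ) : HasDerivAt Phi (heatK 1 ξ) ξ := by
  have hint : Integrable (heatK 1) := integrable_heatK zero_le_one
  have hPhi : Phi = fun b => Phi 0 + ∫ z in (0 : ℝ)..b, heatK 1 z := by
    ext b
    rw [Phi, Phi, ← intervalIntegral.integral_Iic_sub_Iic hint.integrableOn hint.integrableOn]
    ring
  rw [hPhi]
  exact (intervalIntegral.integral_hasDerivAt_right hint.intervalIntegrable
    ((continuous_heatK 1).stronglyMeasurableAtFilter _ _)
    (continuous_heatK 1).continuousAt).const_add _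

lemma integral_heatK_sub_mul_Phi (ht : 0 < t) (ht' : 0 < t') (c d : ℝ) :
    ∫ m, heatK t (m - c) * Phi ((d - m) / √t') = Phi ((d - c) / √(t + t')) := by
  set f : ℝ → ℝ → ℝ := fun m s => heatK t (m - c) * heatK t' (s - m)
  have hshear : MeasurePreserving (fun p : ℝ × ℝ => (p.1, p.2 - p.1))
      (volume.prod volume) (volume.prod volume) :=
    measurePreserving_prod_sub volume volume
  have hprod : Integrable (fun p : ℝ × ℝ => heatK t (p.1 - c) * heatK t' p.2)
      (volume.prod volume) :=
    ((integrable_heatK ht.le).comp_sub_right c).mul_prod (integrable_heatK ht'.le)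
  have hf : Integrable (Function.uncurry f) (volume.prod (volume.restrict (Iic d))) := by
    rw [← Measure.restrict_univ (μ := volume), Measure.prod_restrict, Measure.restrict_univ]
    exact ((hshear.integrable_comp hprod.aestronglyMeasurable).mpr hprod).restrict
  calc ∫ m, heatK t (m - c) * Phi ((d - m) / √t')
      = ∫ m, ∫ s in Iic d, f m s := by
        simp_rw [f, integral_const_mul, setIntegral_Iic_heatK_sub ht']
    _ = ∫ s in Iic d, ∫ m, f m s := integral_integral_swap hf
    _ = ∫ s in Iic d, heatK (t + t') (s - c) := by
        simp_rw [f, integral_heatK_sub_mul_heatK_sub ht ht']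
    _ = Phi ((d - c) / √(t + t')) := setIntegral_Iic_heatK_sub (by positivity) d c

end Phi

section LogCoordinates

variable {a x t : ℝ}

lemma setIntegral_image_mul_exp_mul (ha : 0 < a) (hx : 0 < x) {s : Set ℝ} (hs : MeasurableSet s)
    (g : ℝ → ℝ) :
    ∫ y in (fun u => x * exp (a * u)) '' s, g y
      = ∫ u in s, a * (x * exp (a * u)) * g (x * exp (a * u)) := by
  have hderiv (u : ℝ) : HasDerivAt (fun u => x * exp (a * u)) (a * (x * exp (a * u))) u :=
    (((hasDerivAt_id' u).const_mul a).exp.const_mul x).congr_deriv (by ring)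
  have hinj : Function.Injective fun u => x * exp (a * u) := fun u v h =>
    mul_left_cancel₀ ha.ne' (exp_injective (mul_left_cancel₀ hx.ne' h))
  rw [integral_image_eq_integral_abs_deriv_smul hs (fun u _ => (hderiv u).hasDerivWithinAt)
    hinj.injOn]
  refine setIntegral_congr_fun hs fun u _ => ?_
  rw [smul_eq_mul, abs_of_pos (by positivity)]

lemma image_mul_exp_mul_univ (ha : 0 < a) (hx : 0 < x) :
    (fun u => x * exp (a * u)) '' univ = Ioi 0 := by
  ext y
  refine ⟨?_, fun hy => ⟨log (y / x) / a, trivial, ?_⟩⟩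
  · rintro ⟨u, -, rfl⟩
    exact mem_Ioi.mpr (by positivity)
  dsimp only
  rw [mul_div_cancel₀ _ ha.ne', exp_log (div_pos hy hx), mul_div_cancel₀ _ hx.ne']

lemma image_mul_exp_mul_Iic_zero (ha : 0 < a) (hx : 0 < x) :
    (fun u => x * exp (a * u)) '' Iic 0 = Ioc 0 x := by
  ext y
  constructor
  · rintro ⟨u, hu, rfl⟩
    exact ⟨by positivity, mul_le_of_le_one_right hx.le (exp_le_one_iff.mpr
      (mul_nonpos_of_nonneg_of_nonpos ha.le hu))⟩
  · rintro ⟨hy, hyx⟩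
    refine ⟨log (y / x) / a, div_nonpos_of_nonpos_of_nonneg ?_ ha.le, ?_⟩
    · exact log_nonpos (div_pos hy hx).le ((div_le_one hx).mpr hyx)
    · dsimp only
      rw [mul_div_cancel₀ _ ha.ne', exp_log (div_pos hy hx), mul_div_cancel₀ _ hx.ne']

lemma qhat_eq (a t z y : ℝ) : qhat a t z y = (a * z)⁻¹ * heatK t (theta a z y t) := rfl

lemma theta_mul_exp_mul (ha : a ≠ 0) (hx : 0 < x) (u y t : ℝ) :
    theta a (x * exp (a * u)) y t = theta a x y t + u := by
  rw [theta, theta, log_mul hx.ne' (exp_pos _).ne', log_exp]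
  field_simp
  ring

lemma theta_self_mul_exp_mul (ha : a ≠ 0) (hx : 0 < x) (u t : ℝ) :
    theta a x (x * exp (a * u)) t = -u - a * t / 2 := by
  rw [theta, log_mul hx.ne' (exp_pos _).ne', log_exp]
  field_simp
  ring

lemma Psi_eq_Phi_theta (ha : 0 < a) (hx : 0 < x) (ht : 0 < t) (y : ℝ) :
    Psi a x t y = Phi (theta a x y t / √t) := by
  have hintegrand (u : ℝ) : a * (x * exp (a * u)) * qhat a t (x * exp (a * u)) y
      = heatK t (u - -theta a x y t) := by
    rw [qhat_eq, ← mul_assoc, mul_inv_cancel₀ (by positivity), one_mul,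
      theta_mul_exp_mul ha.ne' hx, sub_neg_eq_add, add_comm]
  rw [Psi, ← image_mul_exp_mul_Iic_zero ha hx,
    setIntegral_image_mul_exp_mul ha hx measurableSet_Iic]
  simp_rw [hintegrand, setIntegral_Iic_heatK_sub ht, zero_sub, neg_neg]

end LogCoordinates

lemma integrable_exp_neg_mul_abs {b : ℝ} (hb : 0 < b) :
    Integrable fun m : ℝ => exp (-(b * |m|)) := by
  rw [← integrableOn_univ, ← Iic_union_Ioi (a := 0)]
  refine IntegrableOn.union ((integrableOn_exp_mul_Iic hb 0).congr_fun (fun m hm => ?_)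
    measurableSet_Iic) ((integrableOn_exp_mul_Ioi (neg_neg_iff_pos.mpr hb) 0).congr_fun
    (fun m hm => ?_) measurableSet_Ioi)
  · rw [abs_of_nonpos hm, mul_neg, neg_neg]
  · dsimp only
    rw [abs_of_pos hm, neg_mul]

lemma tendsto_exp_neg_mul_abs {b : ℝ} (hb : 0 < b) :
    Tendsto (fun m : ℝ => exp (-(b * |m|))) (atBot ⊔ atTop) (𝓝 0) := by
  have habs : Tendsto (fun m : ℝ => |m|) (atBot ⊔ atTop) atTop := by
    rw [← comap_abs_atTop]
    exact tendsto_comap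
  exact tendsto_exp_atBot.comp (tendsto_neg_atTop_atBot.comp (habs.const_mul_atTop hb))

/-- `Ψ^x(t, x e^{a m})`, which does not depend on `x` (see `Psi_mul_exp_mul`). -/
noncomputable def PsiLog (a t m : ℝ) : ℝ := Phi ((-m - a * t / 2) / √t)

section PsiLog

variable {a x t t' : ℝ}

lemma Psi_mul_exp_mul (ha : 0 < a) (hx : 0 < x) (ht : 0 < t) (m : ℝ) :
    Psi a x t (x * exp (a * m)) = PsiLog a t m := by
  rw [Psi_eq_Phi_theta ha hx ht, theta_self_mul_exp_mul ha.ne' hx, PsiLog]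

lemma PsiLog_nonneg (a t m : ℝ) : 0 ≤ PsiLog a t m := Phi_nonneg _

lemma PsiLog_le_one (a t m : ℝ) : PsiLog a t m ≤ 1 := Phi_le_one _

lemma hasDerivAt_PsiLog (ht : 0 < t) (m : ℝ) :
    HasDerivAt (PsiLog a t) (-heatK t (m + a * t / 2)) m := by
  have hinner : HasDerivAt (fun m => (-m - a * t / 2) / √t) (-(√t)⁻¹) m := by
    simpa [neg_div] using (((hasDerivAt_id m).neg).sub_const (a * t / 2)).div_const √t
  refine ((hasDerivAt_Phi _).comp m hinner).congr_deriv ?_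
  rw [show (-m - a * t / 2) / √t = -((m + a * t / 2) / √t) by ring, heatK_neg,
    heatK_eq_inv_sqrt_mul_heatK_one ht (m + a * t / 2)]
  ring

lemma continuous_PsiLog (ht : 0 < t) : Continuous (PsiLog a t) :=
  continuous_iff_continuousAt.mpr fun m => (hasDerivAt_PsiLog ht m).continuousAt

/-- For `m ≥ 0` this is Chernoff's bound `Phi_le_exp` with exponent `2 a √t`. -/
lemma exp_mul_mul_PsiLog_le (ha : 0 ≤ a) (ht : 0 < t) (m : ℝ) :
    exp (a * m) * PsiLog a t m ≤ exp (a ^ 2 * t) * exp (-(a * |m|)) := by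
  rcases le_total m 0 with hm | hm
  · rw [abs_of_nonpos hm, mul_neg, neg_neg]
    calc exp (a * m) * PsiLog a t m ≤ exp (a * m) := mul_le_of_le_one_right (exp_pos _).le
          (PsiLog_le_one a t m)
      _ ≤ exp (a ^ 2 * t) * exp (a * m) :=
          le_mul_of_one_le_left (exp_pos _).le (one_le_exp (by positivity))
  · have hexponent : 2 * a * √t * ((-m - a * t / 2) / √t) + (2 * a * √t) ^ 2 / 2
        = a ^ 2 * t - 2 * a * m := by
      field_simp
      rw [sq_sqrt ht.le]
      ring
    have hchernoff := Phi_le_exp (l := 2 * a * √t) (by positivity) ((-m - a * t / 2) / √t)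
    rw [hexponent] at hchernoff
    calc exp (a * m) * PsiLog a t m ≤ exp (a * m) * exp (a ^ 2 * t - 2 * a * m) :=
          mul_le_mul_of_nonneg_left hchernoff (exp_pos _).le
      _ = exp (a ^ 2 * t) * exp (-(a * |m|)) := by
          rw [abs_of_nonneg hm, ← exp_add, ← exp_add]
          ring_nf

lemma integral_heatK_sub_mul_PsiLog (ht : 0 < t) (ht' : 0 < t') :
    ∫ m, heatK t (m - a * t / 2) * PsiLog a t' m = 1 - Phi (a / 2 * √(t + t')) := by
  have harg : (-(a * t' / 2) - a * t / 2) / √(t + t') = -(a / 2 * √(t + t')) := by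
    field_simp
    rw [sq_sqrt (by positivity)]
    ring
  have hPsiLog (m : ℝ) : PsiLog a t' m = Phi ((-(a * t' / 2) - m) / √t') := by
    rw [PsiLog, neg_sub_comm]
  simp_rw [hPsiLog, integral_heatK_sub_mul_Phi ht ht', harg, Phi_neg]

lemma hasDerivAt_exp_mul_mul_PsiLog_mul_PsiLog (ht : 0 < t) (ht' : 0 < t') (m : ℝ) :
    HasDerivAt (fun m => exp (a * m) * (PsiLog a t m * PsiLog a t' m))
      (a * (exp (a * m) * (PsiLog a t m * PsiLog a t' m))
        - (heatK t (m - a * t / 2) * PsiLog a t' m + heatK t' (m - a * t' / 2) * PsiLog a t m))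
      m := by
  refine (((hasDerivAt_id' m).const_mul a).exp.mul
    ((hasDerivAt_PsiLog ht m).mul (hasDerivAt_PsiLog ht' m))).congr_deriv ?_
  rw [← exp_mul_mul_heatK_add a ht.ne' m, ← exp_mul_mul_heatK_add a ht'.ne' m, Pi.mul_apply]
  ring

lemma integrable_heatK_sub_mul_PsiLog (ht : 0 < t) (ht' : 0 < t') :
    Integrable fun m => heatK t (m - a * t / 2) * PsiLog a t' m :=
  ((integrable_heatK ht.le).comp_sub_right _).mul_bdd
    (continuous_PsiLog ht').aestronglyMeasurable
    (ae_of_all _ fun m => by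
      rw [norm_of_nonneg (PsiLog_nonneg a t' m)]
      exact PsiLog_le_one a t' m)

lemma integral_mul_exp_mul_PsiLog_mul_PsiLog (ha : 0 < a) (ht : 0 < t) (ht' : 0 < t') :
    ∫ m, a * (exp (a * m) * (PsiLog a t m * PsiLog a t' m))
      = 2 * (1 - Phi (a / 2 * √(t + t'))) := by
  set G : ℝ → ℝ := fun m => exp (a * m) * (PsiLog a t m * PsiLog a t' m)
  have hG_nonneg (m : ℝ) : 0 ≤ G m :=
    mul_nonneg (exp_pos _).le (mul_nonneg (PsiLog_nonneg a t m) (PsiLog_nonneg a t' m))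
  have hG_le (m : ℝ) : G m ≤ exp (a ^ 2 * t) * exp (-(a * |m|)) :=
    (mul_le_mul_of_nonneg_left (mul_le_of_le_one_right (PsiLog_nonneg a t m)
      (PsiLog_le_one a t' m)) (exp_pos _).le).trans (exp_mul_mul_PsiLog_le ha.le ht m)
  have hG_int : Integrable G :=
    ((integrable_exp_neg_mul_abs ha).const_mul _).mono'
      ((continuous_exp.comp (continuous_const.mul continuous_id)).mul
        ((continuous_PsiLog ht).mul (continuous_PsiLog ht'))).aestronglyMeasurable
      (ae_of_all _ fun m => (norm_of_nonneg (hG_nonneg m)).trans_le (hG_le m))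
  have hG_lim : Tendsto G (atBot ⊔ atTop) (𝓝 0) :=
    squeeze_zero hG_nonneg hG_le
      (by simpa using (tendsto_exp_neg_mul_abs ha).const_mul (exp (a ^ 2 * t)))
  have hderiv (m : ℝ) : HasDerivAt G (a * G m
      - (heatK t (m - a * t / 2) * PsiLog a t' m + heatK t' (m - a * t' / 2) * PsiLog a t m)) m :=
    hasDerivAt_exp_mul_mul_PsiLog_mul_PsiLog ht ht' m
  have h₁ := integrable_heatK_sub_mul_PsiLog (a := a) ht ht'
  have h₂ := integrable_heatK_sub_mul_PsiLog (a := a) ht' ht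
  have h₁₂ : Integrable fun m =>
      heatK t (m - a * t / 2) * PsiLog a t' m + heatK t' (m - a * t' / 2) * PsiLog a t m :=
    h₁.add h₂
  have hparts := integral_of_hasDerivAt_of_tendsto hderiv ((hG_int.const_mul a).sub h₁₂)
    (hG_lim.mono_left le_sup_left) (hG_lim.mono_left le_sup_right)
  rw [sub_self, integral_sub (hG_int.const_mul a) h₁₂, integral_add h₁ h₂,
    integral_heatK_sub_mul_PsiLog ht ht', integral_heatK_sub_mul_PsiLog ht' ht, add_comm t',
    sub_eq_zero] at hparts
  rw [hparts]
  ring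

end PsiLog

theorem Psi_covariance (a : ℝ) (ha : 0 < a) (x : ℝ) (hx : 0 < x)
    (t t' : ℝ) (ht : 0 < t) (ht' : 0 < t') :
    (∫ y in Set.Ioi (0:ℝ), Psi a x t y * Psi a x t' y)
      = 2 * x * (1 - Phi (a / 2 * Real.sqrt (t + t'))) := by
  calc (∫ y in Ioi 0, Psi a x t y * Psi a x t' y)
      = ∫ m, a * (x * exp (a * m))
          * (Psi a x t (x * exp (a * m)) * Psi a x t' (x * exp (a * m))) := by
        rw [← image_mul_exp_mul_univ ha hx,
          setIntegral_image_mul_exp_mul ha hx MeasurableSet.univ, setIntegral_univ]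
    _ = x * ∫ m, a * (exp (a * m) * (PsiLog a t m * PsiLog a t' m)) := by
        simp_rw [Psi_mul_exp_mul ha hx ht, Psi_mul_exp_mul ha hx ht', ← integral_const_mul]
        congr with m
        ring
    _ = 2 * x * (1 - Phi (a / 2 * √(t + t'))) := by
        rw [integral_mul_exp_mul_PsiLog_mul_PsiLog ha ht ht']
        ring
end
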